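/- arXiv:2006.14550 — 4 statements merged into one kernel-verified Lean document; each statement's English description precedes it below -/
import Mathlib

section
/- There exist a flow network G=(V,E) with nodes s,t and lifted graph G'=(V',E') as above, and a pair (y,y') ∈ [0,1]^E × [0,1]^{E'} that satisfies all lifted multicut path inequalities but violates some path inequality. Hence the path inequalities define a strictly tighter relaxation than the lifted multicut path inequalities. -/
open Finset
open scoped Classical

section LiftedDisjointPaths

variable {V : Type*} [Fintype V] [DecidableEq V]

/-- A `vw`-path in the digraph with edge set `E`, given by its (nonempty) list of vertices:
it starts at `v`, ends at `w`, and consecutive vertices are joined by edges of `E`. -/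
def IsPath (E : Finset (V × V)) (v w : V) (p : List V) : Prop :=
  p ≠ [] ∧ p.head? = some v ∧ p.getLast? = some w ∧ p.Chain' (fun a b => (a, b) ∈ E)

/-- The edge list `P_E` of a path given by its vertex list. -/
def pEdges (p : List V) : List (V × V) := p.zip p.tail

/-- The reachability relation `R`: `vw ∈ R` iff `v = w` or there is a `vw`-path in `G`. -/
def Reach (E : Finset (V × V)) (v w : V) : Prop :=
  v = w ∨ ∃ p, IsPath E v w p

/-- `G = (V,E)` is a flow network with source `s` and sink `t`: it is acyclic, every node is
reachable from `s`, and `t` is reachable from every node. -/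
structure IsFlowNetwork (E : Finset (V × V)) (s t : V) : Prop where
  acyclic : ∀ v w : V, (v, w) ∈ E → ¬ Reach E w v
  reach_from_source : ∀ v : V, Reach E s v
  reach_to_sink : ∀ v : V, Reach E v t

/-- The lifted graph `G' = (V', E')` has node set `V' = V ∖ {s,t}`. -/
def IsLiftedGraph (E' : Finset (V × V)) (s t : V) : Prop :=
  ∀ e ∈ E', e.1 ≠ s ∧ e.1 ≠ t ∧ e.2 ≠ s ∧ e.2 ≠ t

/-- `y ∈ [0,1]^E`. -/
def InUnitBox (E : Finset (V × V)) (y : V × V → ℝ) : Prop :=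
  ∀ e ∈ E, 0 ≤ y e ∧ y e ≤ 1

/-! ### Paths in the multigraph `G ∪ G'` -/

/-- Vertex list `P_V` of a path in `G ∪ G'` starting at `v`; each step of `q` records the next
vertex together with a flag saying whether the edge used is a lifted edge. -/
def mVerts (v : V) (q : List (V × Bool)) : List V := v :: q.map Prod.fst

/-- The labelled edge list of a path in `G ∪ G'`. -/
def mEdges (v : V) (q : List (V × Bool)) : List ((V × V) × Bool) :=
  List.zipWith (fun a ub => ((a, ub.1), ub.2)) (mVerts v q) q

/-- `P_E`: the set of base edges of a path in `G ∪ G'`. -/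
def mBase (v : V) (q : List (V × Bool)) : Finset (V × V) :=
  ((mEdges v q).filterMap fun eb => if eb.2 then none else some eb.1).toFinset

/-- `P_{E'}`: the set of lifted edges of a path in `G ∪ G'`. -/
def mLifted (v : V) (q : List (V × Bool)) : Finset (V × V) :=
  ((mEdges v q).filterMap fun eb => if eb.2 then some eb.1 else none).toFinset

/-- A `vw`-path in the multigraph `G ∪ G'`: it starts at `v`, ends at `w`, each base step uses
an edge of `E`, each lifted step uses an edge of `E'`, and the sets of base and lifted edges
used are disjoint. -/
def IsMPath (E E' : Finset (V × V)) (v w : V) (q : List (V × Bool)) : Prop :=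
  (mVerts v q).getLast? = some w ∧
  (∀ eb ∈ mEdges v q, if eb.2 then eb.1 ∈ E' else eb.1 ∈ E) ∧
  Disjoint (mBase v q) (mLifted v q)

/-! ### The families of linear inequalities -/

/-- All path inequalities: for every lifted edge `vw ∈ E'` and every `vw`-path `P` in `G`,
`y'_{vw} ≥ Σ_{j ∈ P_V : vj ∈ E} y_{vj} − Σ_{i ∈ P_V∖{v,w}} Σ_{k ∉ P_V : ik ∈ E} y_{ik}`. -/
def PathIneqs (E E' : Finset (V × V)) (y y' : V × V → ℝ) : Prop :=
  ∀ v w : V, (v, w) ∈ E' → ∀ p : List V, IsPath E v w p →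
    (∑ j ∈ p.toFinset.filter (fun j => (v, j) ∈ E), y (v, j))
      - (∑ i ∈ p.toFinset \ {v, w},
          ∑ k ∈ (univ \ p.toFinset).filter (fun k => (i, k) ∈ E), y (i, k))
    ≤ y' (v, w)

/-- All lifted multicut path inequalities: for every lifted edge `vw ∈ E'` and every
`vw`-path `P` in `G`, `y'_{vw} ≥ Σ_{ij ∈ P_E} (y_{ij} − 1) + 1`. -/
def MulticutPathIneqs (E E' : Finset (V × V)) (y y' : V × V → ℝ) : Prop :=
  ∀ v w : V, (v, w) ∈ E' → ∀ p : List V, IsPath E v w p →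
    (∑ e ∈ (pEdges p).toFinset, (y e - 1)) + 1 ≤ y' (v, w)

/-- All lifted path inequalities: for every lifted edge `vw ∈ E'` and every `vw`-path `P` in
`G ∪ G'`, `y'_{vw} ≥ Σ_{j ∈ P_V : vj∈E} y_{vj} − Σ_{i ∈ P_V∖{v,w}} Σ_{k ∉ P_V : ik∈E} y_{ik}
+ Σ_{ij ∈ P_{E'}} y'_{ij} − Σ_{ij ∈ P_{E'} : ij∈E} y_{ij}`. -/
def LiftedPathIneqs (E E' : Finset (V × V)) (y y' : V × V → ℝ) : Prop :=
  ∀ v w : V, (v, w) ∈ E' → ∀ q : List (V × Bool), IsMPath E E' v w q →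
    (∑ j ∈ (mVerts v q).toFinset.filter (fun j => (v, j) ∈ E), y (v, j))
      - (∑ i ∈ (mVerts v q).toFinset \ {v, w},
          ∑ k ∈ (univ \ (mVerts v q).toFinset).filter (fun k => (i, k) ∈ E), y (i, k))
      + (∑ e ∈ mLifted v q, y' e)
      - (∑ e ∈ (mLifted v q).filter (fun e => e ∈ E), y e)
    ≤ y' (v, w)

/-- All path-induced cut inequalities: for every lifted edge `vw ∈ E'`, every node `u` with
`uw ∈ R` and `u ≠ w`, and every `vu`-path `P` in `G`,
`y'_{vw} ≤ Σ_{i ∈ P_V} Σ_{k ∉ P_V : ik∈E, kw∈R} y_{ik}`. -/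
def PathCutIneqs (E E' : Finset (V × V)) (y y' : V × V → ℝ) : Prop :=
  ∀ v w : V, (v, w) ∈ E' → ∀ u : V, Reach E u w → u ≠ w → ∀ p : List V, IsPath E v u p →
    y' (v, w) ≤
      ∑ i ∈ p.toFinset,
        ∑ k ∈ (univ \ p.toFinset).filter (fun k => (i, k) ∈ E ∧ Reach E k w), y (i, k)

/-- All lifted path-induced cut inequalities: for every lifted edge `vw ∈ E'`, every node `u`
with `uw ∈ R` and `u ≠ w`, and every `vu`-path `P` in `G ∪ G'`,
`y'_{vw} ≤ Σ_{i ∈ P_V} Σ_{k ∉ P_V : ik∈E, kw∈R} y_{ik} − Σ_{ij ∈ P_{E'}} y'_{ij}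
+ Σ_{ij ∈ P_{E'} : ij∈E} y_{ij}`. -/
def LiftedPathCutIneqs (E E' : Finset (V × V)) (y y' : V × V → ℝ) : Prop :=
  ∀ v w : V, (v, w) ∈ E' → ∀ u : V, Reach E u w → u ≠ w →
    ∀ q : List (V × Bool), IsMPath E E' v u q →
    y' (v, w) ≤
      (∑ i ∈ (mVerts v q).toFinset,
        ∑ k ∈ (univ \ (mVerts v q).toFinset).filter (fun k => (i, k) ∈ E ∧ Reach E k w),
          y (i, k))
      - (∑ e ∈ mLifted v q, y' e)
      + (∑ e ∈ (mLifted v q).filter (fun e => e ∈ E), y e)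

/-- All strengthened lifted path-induced cut inequalities: for every lifted edge `vw ∈ E'`
and every `vu`-path `P` in `G ∪ G'` with `uw ∈ E'`,
`y'_{vw} ≤ Σ_{i ∈ P_V∖{u}} Σ_{k ∉ P_V : ik∈E, kw∈R} y_{ik} − Σ_{ij ∈ P_{E'}} y'_{ij}
+ Σ_{ij ∈ P_{E'} : ij∈E} y_{ij} + y'_{uw}`. -/
def StrongLiftedPathCutIneqs (E E' : Finset (V × V)) (y y' : V × V → ℝ) : Prop :=
  ∀ v w : V, (v, w) ∈ E' → ∀ u : V, (u, w) ∈ E' →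
    ∀ q : List (V × Bool), IsMPath E E' v u q →
    y' (v, w) ≤
      (∑ i ∈ (mVerts v q).toFinset \ {u},
        ∑ k ∈ (univ \ (mVerts v q).toFinset).filter (fun k => (i, k) ∈ E ∧ Reach E k w),
          y (i, k))
      - (∑ e ∈ mLifted v q, y' e)
      + (∑ e ∈ (mLifted v q).filter (fun e => e ∈ E), y e)
      + y' (u, w)

/-- All symmetric path-induced cut inequalities: for every lifted edge `vw ∈ E'`, every node
`u` with `vu ∈ R` and `u ≠ v`, and every `uw`-path `P` in `G`,
`y'_{vw} ≤ Σ_{i ∈ P_V} Σ_{k ∉ P_V : ki∈E, vk∈R} y_{ki}`. -/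
def SymPathCutIneqs (E E' : Finset (V × V)) (y y' : V × V → ℝ) : Prop :=
  ∀ v w : V, (v, w) ∈ E' → ∀ u : V, Reach E v u → u ≠ v → ∀ p : List V, IsPath E u w p →
    y' (v, w) ≤
      ∑ i ∈ p.toFinset,
        ∑ k ∈ (univ \ p.toFinset).filter (fun k => (k, i) ∈ E ∧ Reach E v k), y (k, i)

/-- All symmetric lifted path-induced cut inequalities: for every lifted edge `vw ∈ E'`,
every node `u` with `vu ∈ R` and `u ≠ v`, and every `uw`-path `P` in `G ∪ G'`,
`y'_{vw} ≤ Σ_{i ∈ P_V} Σ_{k ∉ P_V : ki∈E, vk∈R} y_{ki} − Σ_{ij ∈ P_{E'}} y'_{ij}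
+ Σ_{ij ∈ P_{E'} : ij∈E} y_{ij}`. -/
def SymLiftedPathCutIneqs (E E' : Finset (V × V)) (y y' : V × V → ℝ) : Prop :=
  ∀ v w : V, (v, w) ∈ E' → ∀ u : V, Reach E v u → u ≠ v →
    ∀ q : List (V × Bool), IsMPath E E' u w q →
    y' (v, w) ≤
      (∑ i ∈ (mVerts u q).toFinset,
        ∑ k ∈ (univ \ (mVerts u q).toFinset).filter (fun k => (k, i) ∈ E ∧ Reach E v k),
          y (k, i))
      - (∑ e ∈ mLifted u q, y' e)
      + (∑ e ∈ (mLifted u q).filter (fun e => e ∈ E), y e)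

/-- All strengthened symmetric lifted path-induced cut inequalities: for every lifted edge
`vw ∈ E'` and every `uw`-path `P` in `G ∪ G'` with `vu ∈ E'`,
`y'_{vw} ≤ Σ_{i ∈ P_V∖{u}} Σ_{k ∉ P_V : ki∈E, vk∈R} y_{ki} − Σ_{ij ∈ P_{E'}} y'_{ij}
+ Σ_{ij ∈ P_{E'} : ij∈E} y_{ij} + y'_{vu}`. -/
def StrongSymLiftedPathCutIneqs (E E' : Finset (V × V)) (y y' : V × V → ℝ) : Prop :=
  ∀ v w : V, (v, w) ∈ E' → ∀ u : V, (v, u) ∈ E' →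
    ∀ q : List (V × Bool), IsMPath E E' u w q →
    y' (v, w) ≤
      (∑ i ∈ (mVerts u q).toFinset \ {u},
        ∑ k ∈ (univ \ (mVerts u q).toFinset).filter (fun k => (k, i) ∈ E ∧ Reach E v k),
          y (k, i))
      - (∑ e ∈ mLifted u q, y' e)
      + (∑ e ∈ (mLifted u q).filter (fun e => e ∈ E), y e)
      + y' (v, u)

/-- The two single node cut inequalities for every lifted edge `vw ∈ E'`:
`y'_{vw} ≤ Σ_{u : vu∈E, uw∈R} y_{vu}` and `y'_{vw} ≤ Σ_{u : uw∈E, vu∈R} y_{uw}`. -/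
def SingleNodeCutIneqs (E E' : Finset (V × V)) (y y' : V × V → ℝ) : Prop :=
  ∀ v w : V, (v, w) ∈ E' →
    (y' (v, w) ≤ ∑ u ∈ univ.filter (fun u => (v, u) ∈ E ∧ Reach E u w), y (v, u)) ∧
    (y' (v, w) ≤ ∑ u ∈ univ.filter (fun u => (u, w) ∈ E ∧ Reach E v u), y (u, w))

/-- A feasible integral solution `(x,y,y')` of the lifted disjoint paths problem:
`x,y,y'` are binary, flow conservation holds at every node other than `s` and `t`, and a
lifted edge is active iff there is an active path in `G` between its endpoints. -/
def FeasibleIntegral (E E' : Finset (V × V)) (s t : V)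
    (x : V → ℝ) (y y' : V × V → ℝ) : Prop :=
  (∀ v : V, x v = 0 ∨ x v = 1) ∧
  (∀ e ∈ E, y e = 0 ∨ y e = 1) ∧
  (∀ e ∈ E', y' e = 0 ∨ y' e = 1) ∧
  (∀ v : V, v ≠ s → v ≠ t →
    (∑ u ∈ univ.filter (fun u => (u, v) ∈ E), y (u, v)) = x v ∧
    (∑ w ∈ univ.filter (fun w => (v, w) ∈ E), y (v, w)) = x v) ∧
  (∀ v w : V, (v, w) ∈ E' →
    (y' (v, w) = 1 ↔ ∃ p : List V, IsPath E v w p ∧ ∀ e ∈ pEdges p, y e = 1))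

end LiftedDisjointPaths

/-
Take the DAG `0 → 1 → 2 → 3 → 4` with the shortcut `1 → 3`, the lifted edge `13`, and every
variable equal to `1/2`. A `vw`-path with `k ≥ 1` edges gives the lifted multicut path inequality
`y'_{vw} ≥ 1 - k/2`, which holds. On the path `1 → 2 → 3`, however, both edges leaving `1` stay
on the path and no edge leaves `2`, so the path inequality asks for `y'_{13} ≥ y_{12} + y_{13} = 1`.
-/

section Reachability

variable {V : Type*} {E : Finset (V × V)} {v w : V}

theorem isPath_cons (l : List V) (h : (v :: l).IsChain fun a b => (a, b) ∈ E) :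
    IsPath E v ((v :: l).getLast (List.cons_ne_nil _ _)) (v :: l) :=
  ⟨List.cons_ne_nil _ _, rfl, List.getLast?_eq_some_getLast _, h⟩

theorem reach_cons (l : List V) (h : (v :: l).IsChain fun a b => (a, b) ∈ E) :
    Reach E v ((v :: l).getLast (List.cons_ne_nil _ _)) :=
  .inr ⟨_, isPath_cons l h⟩

theorem exists_isPath_iff_reflTransGen :
    (∃ p, IsPath E v w p) ↔ Relation.ReflTransGen (fun a b => (a, b) ∈ E) v w := by
  constructor
  · rintro ⟨_ | ⟨a, l⟩, hne, hhead, hlast, hchain⟩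
    · exact absurd rfl hne
    · obtain rfl : a = v := by simpa using hhead
      exact List.relationReflTransGen_of_exists_isChain_cons l hchain
        (by simpa [List.getLast?_eq_some_getLast] using hlast)
  · intro h
    obtain ⟨l, hchain, hlast⟩ := List.exists_isChain_cons_of_relationReflTransGen h
    exact ⟨v :: l, hlast ▸ isPath_cons l hchain⟩

theorem reach_iff_reflTransGen :
    Reach E v w ↔ Relation.ReflTransGen (fun a b => (a, b) ∈ E) v w := by
  rw [Reach, exists_isPath_iff_reflTransGen]
  exact or_iff_right_of_imp fun h => h ▸ .refl

theorem Reach.le_of_forall_lt [Preorder V] (hE : ∀ e ∈ E, e.1 < e.2) (h : Reach E v w) :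
    v ≤ w := by
  rw [reach_iff_reflTransGen] at h
  induction h with
  | refl => exact le_rfl
  | tail _ hbc ih => exact ih.trans (hE _ hbc).le

theorem not_reach_of_forall_lt [Preorder V] (hE : ∀ e ∈ E, e.1 < e.2) (hvw : (v, w) ∈ E) :
    ¬ Reach E w v :=
  fun h => (h.le_of_forall_lt hE).not_gt (hE _ hvw)

end Reachability

theorem IsPath.pEdges_ne_nil {V : Type*} {E : Finset (V × V)} {v w : V} {p : List V}
    (hp : IsPath E v w p) (hvw : v ≠ w) : pEdges p ≠ [] := by
  obtain ⟨hne, hhead, hlast, -⟩ := hp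
  match p, hne with
  | [_], _ => simp_all
  | _ :: _ :: _, _ => simp [pEdges]

theorem multicutPathIneqs_const {V : Type*} [DecidableEq V] {E E' : Finset (V × V)} {c : ℝ}
    (hc : c ≤ 1) (hE' : ∀ e ∈ E', e.1 ≠ e.2) :
    MulticutPathIneqs E E' (fun _ => c) (fun _ => c) := by
  intro v w hvw p hp
  have hcard : 1 ≤ (pEdges p).toFinset.card :=
    Finset.one_le_card.mpr (List.toFinset_nonempty_iff _ |>.mpr (hp.pEdges_ne_nil (hE' _ hvw)))
  have hsum : (pEdges p).toFinset.card * (c - 1) ≤ 1 * (c - 1) :=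
    mul_le_mul_of_nonpos_right (by exact_mod_cast hcard) (sub_nonpos.mpr hc)
  simp only [Finset.sum_const, nsmul_eq_mul]
  linarith

namespace PathIneqsCounterexample

def edges : Finset (Fin 5 × Fin 5) := {(0, 1), (1, 2), (1, 3), (2, 3), (3, 4)}

def liftedEdges : Finset (Fin 5 × Fin 5) := {(1, 3)}

theorem edges_lt : ∀ e ∈ edges, e.1 < e.2 := by decide

theorem isFlowNetwork : IsFlowNetwork edges 0 4 where
  acyclic _ _ := not_reach_of_forall_lt edges_lt
  reach_from_source v := by
    fin_cases v
    exacts [.inl rfl, reach_cons [1] (by decide), reach_cons [1, 2] (by decide),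
      reach_cons [1, 3] (by decide), reach_cons [1, 3, 4] (by decide)]
  reach_to_sink v := by
    fin_cases v
    exacts [reach_cons [1, 3, 4] (by decide), reach_cons [3, 4] (by decide),
      reach_cons [3, 4] (by decide), reach_cons [4] (by decide), .inl rfl]

theorem not_pathIneqs_half : ¬ PathIneqs edges liftedEdges (fun _ => 1 / 2) (fun _ => 1 / 2) := by
  intro h
  have hpath := h 1 3 (by decide) [1, 2, 3] (isPath_cons [2, 3] (by decide))
  have e1 : ({1, 2, 3} : Finset (Fin 5)) \ {1, 3} = {2} := by decide
  have e2 : univ \ ({1, 2, 3} : Finset (Fin 5)) = {0, 4} := by decide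
  simp [edges, e1, e2, Finset.filter_insert, Finset.filter_singleton] at hpath
  norm_num at hpath

end PathIneqsCounterexample

/-- There exist a flow network, a lifted graph and
`(y,y') ∈ [0,1]^E × [0,1]^{E'}` satisfying all lifted multicut path inequalities but violating
some path inequality. -/
theorem multicut_path_ineqs_strictly_weaker :
    ∃ (n : ℕ) (E E' : Finset (Fin n × Fin n)) (s t : Fin n)
      (y y' : Fin n × Fin n → ℝ),
      IsFlowNetwork E s t ∧ IsLiftedGraph E' s t ∧ InUnitBox E y ∧ InUnitBox E' y' ∧
      MulticutPathIneqs E E' y y' ∧ ¬ PathIneqs E E' y y' := by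
  open PathIneqsCounterexample in
  refine ⟨5, edges, liftedEdges, 0, 4, fun _ => 1 / 2, fun _ => 1 / 2, isFlowNetwork, ?_,
    fun _ _ => by norm_num, fun _ _ => by norm_num,
    multicutPathIneqs_const (by norm_num) (by decide), not_pathIneqs_half⟩
  unfold IsLiftedGraph
  decide
end

section
/- There exist a flow network G=(V,E) with nodes s,t and lifted graph G'=(V',E') as above, and a pair (y,y') ∈ [0,1]^E × [0,1]^{E'} that satisfies all path-induced cut inequalities but violates some symmetric path-induced cut inequality. Hence the path-induced cut inequalities together with their symmetric counterparts define a strictly tighter relaxation than the path-induced cut inequalities alone. -/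
open Finset
open scoped Classical

/-!
The counterexample is the diamond `s → v → {a, b} → w → t` with the lifted edge `vw`, `y = 1` on
the two edges leaving `v`, `y = 0` elsewhere, and `y'_{vw} = 1`. No path of `G` visits both `a`
and `b`, so every path starting at `v` misses one of them, and the edge from `v` to that node
leaves the path towards `w` and carries `1`: all path-induced cut inequalities hold. The symmetric
inequality for `u = w` and the one-node path `(w)` only sees the edges into `w`, which carry `0`.
-/

section Rank

variable {V : Type*} {E : Finset (V × V)} (r : V → ℕ)

theorem IsPath.pairwise_rank_lt (hr : ∀ e ∈ E, r e.1 < r e.2) {v w : V} {p : List V}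
    (hp : IsPath E v w p) : p.Pairwise fun a b => r a < r b := by
  have hmap : (p.map r).IsChain (· < ·) :=
    List.isChain_map_of_isChain r (fun a b hab => hr (a, b) hab) hp.2.2.2
  exact List.pairwise_map.mp (List.isChain_iff_pairwise.mp hmap)

theorem IsPath.rank_le (hr : ∀ e ∈ E, r e.1 < r e.2) {v w : V} {p : List V}
    (hp : IsPath E v w p) : r v ≤ r w := by
  obtain ⟨l, rfl⟩ := List.head?_eq_some_iff.mp hp.2.1
  have hw : w ∈ v :: l := List.mem_of_getLast? hp.2.2.1
  rcases List.mem_cons.mp hw with rfl | hw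
  · exact le_rfl
  · exact ((List.pairwise_cons.mp (hp.pairwise_rank_lt r hr)).1 w hw).le

theorem Reach.rank_le (hr : ∀ e ∈ E, r e.1 < r e.2) {v w : V} (h : Reach E v w) :
    r v ≤ r w := by
  rcases h with rfl | ⟨p, hp⟩
  · exact le_rfl
  · exact hp.rank_le r hr

theorem not_reach_of_mem_of_rank_lt (hr : ∀ e ∈ E, r e.1 < r e.2) {v w : V}
    (hvw : (v, w) ∈ E) : ¬ Reach E w v := fun h =>
  (h.rank_le r hr).not_gt (hr _ hvw)

theorem IsPath.eq_of_rank_eq (hr : ∀ e ∈ E, r e.1 < r e.2) {v w : V} {p : List V}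
    (hp : IsPath E v w p) {a b : V} (ha : a ∈ p) (hb : b ∈ p) (hab : r a = r b) : a = b := by
  by_contra hne
  have : Std.Symm fun a b : V => r a ≠ r b := ⟨fun _ _ h => Ne.symm h⟩
  have hne_rank : p.Pairwise fun a b => r a ≠ r b := (hp.pairwise_rank_lt r hr).imp (·.ne)
  exact hne_rank.forall ha hb hne hab

end Rank

instance {V : Type*} [DecidableEq V] (E : Finset (V × V)) (v w : V) :
    DecidablePred (IsPath E v w) := fun p =>
  have : DecidableRel fun a b : V => (a, b) ∈ E := fun a b => Finset.decidableMem (a, b) E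
  inferInstanceAs (Decidable (_ ∧ _ ∧ _ ∧ p.IsChain fun a b => (a, b) ∈ E))

theorem Finset.single_le_sum_sum {ι κ M : Type*} [AddCommMonoid M] [PartialOrder M]
    [IsOrderedAddMonoid M] {f : ι → κ → M} (hf : ∀ i k, 0 ≤ f i k) {s : Finset ι}
    {t : ι → Finset κ} {i : ι} {k : κ} (hi : i ∈ s) (hk : k ∈ t i) :
    f i k ≤ ∑ i ∈ s, ∑ k ∈ t i, f i k :=
  (single_le_sum (fun k _ => hf i k) hk).trans
    (single_le_sum (f := fun i => ∑ k ∈ t i, f i k) (fun j _ => sum_nonneg fun k _ => hf j k) hi)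

namespace DiamondCounterexample

/-- `0 = s`, `1 = v`, `2 = a`, `3 = b`, `4 = w`, `5 = t`. -/
def edges : Finset (Fin 6 × Fin 6) := {(0, 1), (1, 2), (1, 3), (2, 4), (3, 4), (4, 5)}

def liftedEdges : Finset (Fin 6 × Fin 6) := {(1, 4)}

/-- `a` and `b` share a rank, so no path of `G` visits both. -/
def rank : Fin 6 → ℕ := ![0, 1, 2, 2, 3, 4]

noncomputable def flow (e : Fin 6 × Fin 6) : ℝ := if e = (1, 2) ∨ e = (1, 3) then 1 else 0

noncomputable def liftedFlow (e : Fin 6 × Fin 6) : ℝ := if e = (1, 4) then 1 else 0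

theorem rank_lt_of_mem_edges : ∀ e ∈ edges, rank e.1 < rank e.2 := by decide

theorem isFlowNetwork : IsFlowNetwork edges 0 5 where
  acyclic _ _ := not_reach_of_mem_of_rank_lt rank rank_lt_of_mem_edges
  reach_from_source v := by
    fin_cases v
    exacts [Or.inl rfl, Or.inr ⟨[0, 1], by decide⟩, Or.inr ⟨[0, 1, 2], by decide⟩,
      Or.inr ⟨[0, 1, 3], by decide⟩, Or.inr ⟨[0, 1, 2, 4], by decide⟩,
      Or.inr ⟨[0, 1, 2, 4, 5], by decide⟩]
  reach_to_sink v := by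
    fin_cases v
    exacts [Or.inr ⟨[0, 1, 2, 4, 5], by decide⟩, Or.inr ⟨[1, 2, 4, 5], by decide⟩,
      Or.inr ⟨[2, 4, 5], by decide⟩, Or.inr ⟨[3, 4, 5], by decide⟩, Or.inr ⟨[4, 5], by decide⟩,
      Or.inl rfl]

theorem isLiftedGraph : IsLiftedGraph liftedEdges 0 5 := by
  unfold IsLiftedGraph; decide

theorem flow_nonneg (e : Fin 6 × Fin 6) : 0 ≤ flow e := by
  unfold flow; split_ifs <;> norm_num

theorem inUnitBox_flow : InUnitBox edges flow := fun e _ => by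
  unfold flow; split_ifs <;> norm_num

theorem inUnitBox_liftedFlow : InUnitBox liftedEdges liftedFlow := fun e _ => by
  unfold liftedFlow; split_ifs <;> norm_num

theorem exists_middle_not_mem_of_isPath {v w : Fin 6} {p : List (Fin 6)}
    (hp : IsPath edges v w p) :
    ∃ k, (k = 2 ∨ k = 3) ∧ k ∉ p := by
  by_contra! h
  exact absurd (hp.eq_of_rank_eq rank rank_lt_of_mem_edges (h 2 (.inl rfl)) (h 3 (.inr rfl)) rfl)
    (by decide)

theorem pathCutIneqs : PathCutIneqs edges liftedEdges flow liftedFlow := by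
  intro v w hvw u _ _ p hp
  obtain ⟨rfl, rfl⟩ : v = 1 ∧ w = 4 := by simpa [liftedEdges] using hvw
  obtain ⟨k, hk, hkp⟩ := exists_middle_not_mem_of_isPath hp
  have h1p : 1 ∈ p := List.mem_of_mem_head? hp.2.1
  have hk_out : (1, k) ∈ edges ∧ Reach edges k 4 ∧ flow (1, k) = 1 := by
    rcases hk with rfl | rfl
    · exact ⟨by decide, Or.inr ⟨[2, 4], by decide⟩, by simp [flow]⟩
    · exact ⟨by decide, Or.inr ⟨[3, 4], by decide⟩, by simp [flow]⟩
  calc liftedFlow (1, 4) = flow (1, k) := by simp [liftedFlow, hk_out.2.2]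
    _ ≤ _ := Finset.single_le_sum_sum (fun i k => flow_nonneg (i, k)) (List.mem_toFinset.2 h1p)
        (by simpa [hkp] using ⟨hk_out.1, hk_out.2.1⟩)

theorem not_symPathCutIneqs : ¬ SymPathCutIneqs edges liftedEdges flow liftedFlow := by
  intro h
  have hin : ∀ k, flow (k, 4) = 0 := fun k => by simp [flow]
  have h_sym := h 1 4 (by decide) 4 (Or.inr ⟨[1, 2, 4], by decide⟩) (by decide) [4] (by decide)
  norm_num [liftedFlow, hin] at h_sym

end DiamondCounterexample

/-- There exist a flow network, a lifted graph and
`(y,y') ∈ [0,1]^E × [0,1]^{E'}` satisfying all path-induced cut inequalities but violating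
some symmetric path-induced cut inequality. -/
theorem sym_path_cut_ineqs_strictly_improve :
    ∃ (n : ℕ) (E E' : Finset (Fin n × Fin n)) (s t : Fin n)
      (y y' : Fin n × Fin n → ℝ),
      IsFlowNetwork E s t ∧ IsLiftedGraph E' s t ∧ InUnitBox E y ∧ InUnitBox E' y' ∧
      PathCutIneqs E E' y y' ∧ ¬ SymPathCutIneqs E E' y y' := by
  open DiamondCounterexample in
  exact ⟨6, edges, liftedEdges, 0, 5, flow, liftedFlow, isFlowNetwork, isLiftedGraph,
    inUnitBox_flow, inUnitBox_liftedFlow, pathCutIneqs, not_symPathCutIneqs⟩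
end

section
/- There exist a flow network G=(V,E) with nodes s,t and lifted graph G'=(V',E') as above, and a pair (y,y') ∈ [0,1]^E × [0,1]^{E'} that satisfies all lifted path-induced cut inequalities but violates some symmetric lifted path-induced cut inequality. Hence the lifted path-induced cut inequalities together with their symmetric counterparts define a strictly tighter relaxation than the lifted path-induced cut inequalities alone. -/
open Finset
open scoped Classical

/-!
Take `s = 0`, `t = 5`, base edges `s → i → t` for `i = 1, …, 4` together with `1 → 2`, `1 → 3`,
`2 → 3`, `3 → 4`, and lifted edges `1 → 4`, `2 → 4`; put `y = 1/2` on `1 → 2` and `1 → 3`,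
`y = 1` on every other edge, and `y' ≡ 1`.

Every edge increases the node label, so for a lifted edge `v → 4` and `u ≠ 4` reaching `4`, a
`vu`-path in `G ∪ G'` stays in `{1, 2, 3}` and uses no lifted edge. Its node set `S` has an
outgoing cut of weight at least `1` towards nodes reaching `4`: from `max S` leave `3 → 4` or
`2 → 3`, or, if `S = {1}`, both `1 → 2` and `1 → 3`. On the symmetric side, `v = 1`, `u = 2`
and the lifted path `2 → 4` give the right-hand side `y₁₂ + y₃₄ − y'₂₄ = 1/2 < y'₁₄`.
-/

section Paths

variable {V : Type*}

theorem List.IsChain.le_of_getLast?_eq [Preorder V] {r : V → V → Prop} {l : List V} {b x : V}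
    (hr : ∀ ⦃a c⦄, r a c → a ≤ c) (h : l.IsChain r) (hb : l.getLast? = some b) (hx : x ∈ l) :
    x ≤ b :=
  h.backwards_induction (· ≤ b) l (fun _ _ hac hcb => (hr hac).trans hcb)
    (fun hne => by rw [List.getLast?_eq_some_getLast hne, Option.some_inj] at hb; rw [hb])
    x hx

theorem Reach.le [Preorder V] {E : Finset (V × V)} {a b : V} (hE : ∀ e ∈ E, e.1 ≤ e.2)
    (h : Reach E a b) : a ≤ b := by
  rcases h with rfl | ⟨p, -, ha, hb, hp⟩
  · exact le_rfl
  · exact hp.le_of_getLast?_eq (fun a c h => hE (a, c) h) hb (List.mem_of_mem_head? ha)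

theorem reach_of_mem {E : Finset (V × V)} {a b : V} (h : (a, b) ∈ E) : Reach E a b :=
  Or.inr ⟨[a, b], List.cons_ne_nil _ _, rfl, rfl, List.isChain_pair.2 h⟩

theorem reach_of_mem_of_mem {E : Finset (V × V)} {a b c : V} (hab : (a, b) ∈ E)
    (hbc : (b, c) ∈ E) : Reach E a c :=
  Or.inr ⟨[a, b, c], List.cons_ne_nil _ _, rfl, rfl,
    List.isChain_cons_cons.2 ⟨hab, List.isChain_pair.2 hbc⟩⟩

end Paths

section MultiPaths

variable {V : Type*} {E E' : Finset (V × V)} {v : V} {q : List (V × Bool)}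

theorem isChain_mVerts (hq : ∀ eb ∈ mEdges v q, if eb.2 then eb.1 ∈ E' else eb.1 ∈ E) :
    (mVerts v q).IsChain (fun a b => (a, b) ∈ E ∨ (a, b) ∈ E') := by
  induction q generalizing v with
  | nil => exact List.isChain_singleton v
  | cons ub q ih =>
    have hvu : (v, ub.1) ∈ E ∨ (v, ub.1) ∈ E' := by
      have := hq ((v, ub.1), ub.2) List.mem_cons_self
      rcases ub with ⟨u, _ | _⟩
      · exact Or.inl this
      · exact Or.inr this
    exact List.isChain_cons_cons.2 ⟨hvu, ih fun eb heb => hq eb (List.mem_cons_of_mem _ heb)⟩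

theorem snd_mem_mVerts_of_mem_mEdges {eb : (V × V) × Bool} (h : eb ∈ mEdges v q) :
    eb.1.2 ∈ mVerts v q := by
  rw [mEdges, ← List.map_uncurry_zip_eq_zipWith, List.mem_map] at h
  obtain ⟨⟨a, ub⟩, hm, rfl⟩ := h
  exact List.mem_cons_of_mem _ (List.mem_map_of_mem (List.of_mem_zip hm).2)

variable [DecidableEq V]

theorem IsMPath.le_of_mem [Preorder V] {w x : V} (hE : ∀ e ∈ E, e.1 ≤ e.2)
    (hE' : ∀ e ∈ E', e.1 ≤ e.2) (hq : IsMPath E E' v w q) (hx : x ∈ mVerts v q) : x ≤ w :=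
  (isChain_mVerts hq.2.1).le_of_getLast?_eq
    (fun a c h => h.elim (hE (a, c)) (hE' (a, c))) hq.1 hx

theorem mem_mEdges_of_mem_mLifted {e : V × V} (he : e ∈ mLifted v q) :
    (e, true) ∈ mEdges v q := by
  simp only [mLifted, List.mem_toFinset, List.mem_filterMap] at he
  obtain ⟨⟨e', b⟩, hm, hb⟩ := he
  cases b <;> simp_all

end MultiPaths

namespace LiftedCutExample

def E : Finset (Fin 6 × Fin 6) :=
  {(0,1),(0,2),(0,3),(0,4),(0,5),(1,5),(2,5),(3,5),(4,5),(1,2),(1,3),(2,3),(3,4)}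

def E' : Finset (Fin 6 × Fin 6) := {(1,4),(2,4)}

/-- Twice the weights `y`, kept in `ℤ` so that cut weights can be evaluated by `decide`. -/
def Y : Fin 6 × Fin 6 → ℤ := fun e => if e = (1,2) ∨ e = (1,3) then 1 else 2

noncomputable def y : Fin 6 × Fin 6 → ℝ := fun e => (Y e : ℝ) / 2

noncomputable def y' : Fin 6 × Fin 6 → ℝ := fun _ => 1

theorem fst_lt_snd_of_mem_E : ∀ e ∈ E, e.1 < e.2 := by decide

theorem reach_iff (a b : Fin 6) : Reach E a b ↔ a ≤ b := by
  refine ⟨Reach.le fun e he => (fst_lt_snd_of_mem_E e he).le, fun hab => ?_⟩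
  obtain rfl | h := hab.eq_or_lt
  · exact Or.inl rfl
  by_cases he : (a, b) ∈ E
  · exact reach_of_mem he
  obtain ⟨rfl, rfl⟩ | ⟨rfl, rfl⟩ : (a = 1 ∧ b = 4) ∨ (a = 2 ∧ b = 4) := by
    revert a b; decide
  · exact reach_of_mem_of_mem (b := 3) (by decide) (by decide)
  · exact reach_of_mem_of_mem (b := 3) (by decide) (by decide)

theorem two_le_doubled_cut_weight : ∀ S : Finset (Fin 6), (1 ∈ S ∨ 2 ∈ S) → (∀ x ∈ S, x ≤ 3) →
    2 ≤ ∑ i ∈ S, ∑ k ∈ (univ \ S).filter (fun k => (i, k) ∈ E ∧ k ≤ 4), Y (i, k) := by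
  decide

theorem isFlowNetwork : IsFlowNetwork E 0 5 where
  acyclic v w hvw hwv := lt_irrefl v ((fst_lt_snd_of_mem_E _ hvw).trans_le ((reach_iff w v).1 hwv))
  reach_from_source v := (reach_iff 0 v).2 (Fin.zero_le v)
  reach_to_sink v := (reach_iff v 5).2 (Fin.le_last v)

theorem isLiftedGraph : IsLiftedGraph E' 0 5 := by
  unfold IsLiftedGraph; decide

theorem inUnitBox_y : InUnitBox E y := fun e _ => by
  unfold y Y; split_ifs <;> norm_num

theorem inUnitBox_y' : InUnitBox E' y' := fun _ _ => by norm_num [y']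

theorem fst_lt_snd_of_mem_E' : ∀ e ∈ E', e.1 < e.2 := by decide

theorem lifted_edge_cases : ∀ e ∈ E', (e.1 = 1 ∨ e.1 = 2) ∧ e.2 = 4 := by decide

theorem sum_sum_y_eq (S : Finset (Fin 6)) (T : Fin 6 → Finset (Fin 6))
    (f : Fin 6 → Fin 6 → Fin 6 × Fin 6) :
    ∑ i ∈ S, ∑ k ∈ T i, y (f i k) = ((∑ i ∈ S, ∑ k ∈ T i, Y (f i k) : ℤ) : ℝ) / 2 := by
  simp only [y, Int.cast_sum, Finset.sum_div]

theorem liftedPathCutIneqs : LiftedPathCutIneqs E E' y y' := by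
  rintro v w hvw u huw hu q hq
  obtain ⟨hv, rfl⟩ : (v = 1 ∨ v = 2) ∧ w = 4 := lifted_edge_cases _ hvw
  have hu3 : u ≤ 3 := by
    have := lt_of_le_of_ne ((reach_iff u 4).1 huw) hu
    omega
  have hle : ∀ x ∈ mVerts v q, x ≤ 3 := fun x hx =>
    (hq.le_of_mem (fun e he => (fst_lt_snd_of_mem_E e he).le)
      (fun e he => (fst_lt_snd_of_mem_E' e he).le) hx).trans hu3
  have hlifted : mLifted v q = ∅ := by
    refine Finset.eq_empty_of_forall_notMem fun e he => ?_
    have hm := mem_mEdges_of_mem_mLifted he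
    have h4 : e.2 = 4 := (lifted_edge_cases e (hq.2.1 _ hm)).2
    have := hle _ (snd_mem_mVerts_of_mem_mEdges hm)
    rw [h4] at this
    exact absurd this (by decide)
  have hvS : v ∈ (mVerts v q).toFinset := List.mem_toFinset.2 List.mem_cons_self
  have hcut := two_le_doubled_cut_weight (mVerts v q).toFinset (by rcases hv with rfl | rfl <;> simp [hvS])
    (fun x hx => hle x (List.mem_toFinset.1 hx))
  simp only [hlifted, Finset.sum_empty, Finset.filter_empty, sub_zero, add_zero, y', reach_iff,
    sum_sum_y_eq]
  rw [le_div_iff₀ two_pos, one_mul]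
  exact_mod_cast hcut

theorem not_symLiftedPathCutIneqs : ¬ SymLiftedPathCutIneqs E E' y y' := by
  intro h
  have hq : IsMPath E E' 2 4 [(4, true)] := ⟨rfl, by decide, by decide⟩
  have hviol := h 1 4 (by decide) 2 (reach_of_mem (by decide)) (by decide) _ hq
  have hlifted : mLifted (2 : Fin 6) [(4, true)] = {(2, 4)} := by decide
  have hbase : ({(2, 4)} : Finset (Fin 6 × Fin 6)).filter (· ∈ E) = ∅ := by decide
  have hcut : ∑ i ∈ (mVerts (2 : Fin 6) [(4, true)]).toFinset,
      ∑ k ∈ (univ \ (mVerts (2 : Fin 6) [(4, true)]).toFinset).filter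
        (fun k => (k, i) ∈ E ∧ 1 ≤ k), Y (k, i) = 3 := by decide
  simp only [reach_iff, sum_sum_y_eq, hcut, hlifted, hbase, y'] at hviol
  norm_num at hviol

end LiftedCutExample

/-- There exist a flow network, a lifted graph and
`(y,y') ∈ [0,1]^E × [0,1]^{E'}` satisfying all lifted path-induced cut inequalities but
violating some symmetric lifted path-induced cut inequality. -/
theorem sym_lifted_path_cut_ineqs_strictly_improve :
    ∃ (n : ℕ) (E E' : Finset (Fin n × Fin n)) (s t : Fin n)
      (y y' : Fin n × Fin n → ℝ),
      IsFlowNetwork E s t ∧ IsLiftedGraph E' s t ∧ InUnitBox E y ∧ InUnitBox E' y' ∧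
      LiftedPathCutIneqs E E' y y' ∧ ¬ SymLiftedPathCutIneqs E E' y y' :=
  ⟨6, LiftedCutExample.E, LiftedCutExample.E', 0, 5, LiftedCutExample.y, LiftedCutExample.y',
    LiftedCutExample.isFlowNetwork, LiftedCutExample.isLiftedGraph,
    LiftedCutExample.inUnitBox_y, LiftedCutExample.inUnitBox_y',
    LiftedCutExample.liftedPathCutIneqs, LiftedCutExample.not_symLiftedPathCutIneqs⟩
end

section
/- For every flow network G=(V,E) and lifted graph G'=(V',E') as above, every feasible integral solution (x,y,y') of the lifted disjoint paths problem satisfies all path inequalities: for every lifted edge vw ∈ E' and every vw-path P in G, y'_{vw} ≥ Σ_{j ∈ P_V: vj∈E} y_{vj} − Σ_{i ∈ P_V∖{v,w}} Σ_{k ∉ P_V: ik∈E} y_{ik}. -/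
/-!
Since `y` is binary and conserved at `v ∉ {s,t}`, the first sum is at most `x_v ≤ 1` and the
second is nonnegative, so only the case `y'_{vw} = 0` with an active edge `vj` into `P` needs an
argument. Flow conservation at inner nodes lets us follow the active flow from `j`. As `G` is
finite and acyclic this walk cannot stay inside `P_V ∖ {v,w}` forever; it never returns to `v`,
and it cannot reach `w`, since the walk from `v` would then be an active `vw`-path forcing
`y'_{vw} = 1`. So it leaves `P` from an inner node, and the second sum is at least `1`.
-/

open Finset
open scoped Classical

theorem List.exists_rel_of_mem_of_ne_getLast {α : Type*} {r : α → α → Prop} :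
    ∀ {p : List α} {i w : α}, p.IsChain r → i ∈ p → p.getLast? = some w → i ≠ w →
      ∃ k, r i k
  | [_], _, _, _, hi, hlast, hne => by simp_all
  | a :: b :: l, i, w, hp, hi, hlast, hne => by
    rw [List.isChain_cons_cons] at hp
    rcases List.mem_cons.1 hi with rfl | hi
    · exact ⟨b, hp.1⟩
    · rw [List.getLast?_cons_cons] at hlast
      exact exists_rel_of_mem_of_ne_getLast hp.2 hi hlast hne

theorem Relation.exists_rel_notMem {α : Type*} [Finite α] {r : α → α → Prop}
    (hr : ∀ a, ¬ Relation.TransGen r a a) {S : Set α} (hne : S.Nonempty)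
    (hS : ∀ a ∈ S, ∃ b, r a b) : ∃ a ∈ S, ∃ b ∉ S, r a b := by
  have : IsTrans α (fun a b => Relation.TransGen r b a) := ⟨fun _ _ _ hab hbc => hbc.trans hab⟩
  have : Std.Irrefl (fun a b => Relation.TransGen r b a) := ⟨hr⟩
  obtain ⟨a, ha, hmin⟩ :=
    (Finite.wellFounded_of_trans_of_irrefl (fun a b => Relation.TransGen r b a)).has_min S hne
  obtain ⟨b, hab⟩ := hS a ha
  exact ⟨a, ha, b, fun hb => hmin b hb (.single hab), hab⟩

section LiftedDisjointPaths

variable {V : Type*} {E : Finset (V × V)}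

theorem rel_of_mem_pEdges {r : V → V → Prop} :
    ∀ {p : List V}, p.IsChain r → ∀ {e : V × V}, e ∈ pEdges p → r e.1 e.2
  | [], _, _, he => by simp [pEdges] at he
  | [_], _, _, he => by simp [pEdges] at he
  | a :: b :: l, hp, e, he => by
    rw [List.isChain_cons_cons] at hp
    simp only [pEdges, List.tail_cons, List.zip_cons_cons, List.mem_cons] at he
    rcases he with rfl | he
    · exact hp.1
    · exact rel_of_mem_pEdges hp.2 he

theorem exists_isPath_of_reflTransGen {r : V → V → Prop} (hr : ∀ ⦃a b⦄, r a b → (a, b) ∈ E)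
    {v w : V} (h : Relation.ReflTransGen r v w) : ∃ p, IsPath E v w p ∧ p.IsChain r := by
  obtain ⟨l, hl, hlast⟩ := List.exists_isChain_cons_of_relationReflTransGen h
  refine ⟨v :: l, ⟨List.cons_ne_nil _ _, rfl, ?_, hl.imp hr⟩, hl⟩
  rw [List.getLast?_eq_some_getLast (List.cons_ne_nil _ _), hlast]

theorem reach_of_reflTransGen {v w : V}
    (h : Relation.ReflTransGen (fun a b => (a, b) ∈ E) v w) : Reach E v w :=
  Or.inr ((exists_isPath_of_reflTransGen (fun _ _ => id) h).imp fun _ => And.left)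

namespace IsFlowNetwork

variable {s t : V} (hG : IsFlowNetwork E s t)
include hG

theorem not_transGen_self (a : V) : ¬ Relation.TransGen (fun a b => (a, b) ∈ E) a a := by
  intro h
  obtain ⟨b, hab, hba⟩ := Relation.TransGen.head'_iff.mp h
  exact hG.acyclic a b hab (reach_of_reflTransGen hba)

theorem notMem_into_source (u : V) : (u, s) ∉ E :=
  fun h => hG.acyclic u s h (hG.reach_from_source u)

theorem notMem_out_of_sink (k : V) : (t, k) ∉ E :=
  fun h => hG.acyclic t k h (hG.reach_to_sink k)

end IsFlowNetwork

def ActiveEdge (E : Finset (V × V)) (y : V × V → ℝ) (a b : V) : Prop :=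
  (a, b) ∈ E ∧ y (a, b) = 1

namespace FeasibleIntegral

variable [Fintype V] [DecidableEq V] {E' : Finset (V × V)} {s t : V} {x : V → ℝ}
  {y y' : V × V → ℝ} (h : FeasibleIntegral E E' s t x y y')
include h

theorem nonneg {e : V × V} (he : e ∈ E) : 0 ≤ y e := by
  rcases h.2.1 e he with h0 | h1 <;> simp [*]

theorem activeEdge_of_ne_zero {a b : V} (hab : (a, b) ∈ E) (hne : y (a, b) ≠ 0) :
    ActiveEdge E y a b :=
  ⟨hab, (h.2.1 _ hab).resolve_left hne⟩

theorem lifted_eq_one_of_reflTransGen {v w : V} (hvw : (v, w) ∈ E')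
    (hact : Relation.ReflTransGen (ActiveEdge E y) v w) : y' (v, w) = 1 := by
  obtain ⟨p, hp, hchain⟩ := exists_isPath_of_reflTransGen (fun _ _ => And.left) hact
  exact (h.2.2.2.2 v w hvw).2 ⟨p, hp, fun e he => (rel_of_mem_pEdges hchain he).2⟩

theorem sum_filter_out_le_one {v : V} (hs : v ≠ s) (ht : v ≠ t) (T : Finset V) :
    ∑ j ∈ T.filter (fun j => (v, j) ∈ E), y (v, j) ≤ 1 :=
  calc ∑ j ∈ T.filter (fun j => (v, j) ∈ E), y (v, j)
      ≤ ∑ j ∈ univ.filter (fun j => (v, j) ∈ E), y (v, j) :=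
        sum_le_sum_of_subset_of_nonneg (filter_subset_filter _ (subset_univ T))
          fun j hj _ => h.nonneg (mem_filter.1 hj).2
    _ = x v := (h.2.2.2.1 v hs ht).2
    _ ≤ 1 := by rcases h.1 v with hx | hx <;> simp [hx]

theorem exists_activeEdge_out {u i : V} (hs : i ≠ s) (ht : i ≠ t) (hui : ActiveEdge E y u i) :
    ∃ k, ActiveEdge E y i k := by
  obtain ⟨hin, hout⟩ := h.2.2.2.1 i hs ht
  have hpos : 0 < ∑ k ∈ univ.filter (fun k => (i, k) ∈ E), y (i, k) := by
    rw [hout, ← hin]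
    calc (0 : ℝ) < y (u, i) := by rw [hui.2]; exact one_pos
      _ ≤ ∑ u ∈ univ.filter (fun u => (u, i) ∈ E), y (u, i) :=
        single_le_sum (f := fun u => y (u, i)) (fun u hu => h.nonneg (mem_filter.1 hu).2)
          (mem_filter.2 ⟨mem_univ u, hui.1⟩)
  obtain ⟨k, hk, hne⟩ := exists_ne_zero_of_sum_ne_zero hpos.ne'
  exact ⟨k, h.activeEdge_of_ne_zero (mem_filter.1 hk).2 hne⟩

theorem exists_activeEdge_out_of_mem_path (hG : IsFlowNetwork E s t) {v w i : V} {p : List V}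
    (hp : IsPath E v w p) (hip : i ∈ p) (hiw : i ≠ w)
    (hvi : Relation.TransGen (ActiveEdge E y) v i) : ∃ k, ActiveEdge E y i k := by
  obtain ⟨u, -, hui⟩ := Relation.TransGen.tail'_iff.mp hvi
  obtain ⟨k, hik⟩ := List.exists_rel_of_mem_of_ne_getLast hp.2.2.2 hip hp.2.2.1 hiw
  exact h.exists_activeEdge_out (fun his => hG.notMem_into_source u (his ▸ hui.1))
    (fun hit => hG.notMem_out_of_sink k (hit ▸ hik)) hui

theorem one_le_sum_exits (hG : IsFlowNetwork E s t) {v w j : V} {p : List V}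
    (hp : IsPath E v w p) (hvj : ActiveEdge E y v j) (hjp : j ∈ p)
    (hvw : ¬ Relation.ReflTransGen (ActiveEdge E y) v w) :
    1 ≤ ∑ i ∈ p.toFinset \ {v, w},
      ∑ k ∈ (univ \ p.toFinset).filter (fun k => (i, k) ∈ E), y (i, k) := by
  have hacyc (a : V) : ¬ Relation.TransGen (ActiveEdge E y) a a :=
    fun ha => hG.not_transGen_self a (Relation.TransGen.mono (fun _ _ => And.left) _ _ ha)
  let S : Set V := {i | i ∈ p.toFinset \ {v, w} ∧ Relation.TransGen (ActiveEdge E y) v i}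
  have hmemS {i : V} (hvi : Relation.TransGen (ActiveEdge E y) v i) (hip : i ∈ p) : i ∈ S := by
    have hiv : i ≠ v := by rintro rfl; exact hacyc i hvi
    have hiw : i ≠ w := by rintro rfl; exact hvw hvi.to_reflTransGen
    exact ⟨by simp [hip, hiv, hiw], hvi⟩
  obtain ⟨i, ⟨hip, hvi⟩, k, hkS, hik⟩ := Relation.exists_rel_notMem hacyc
    ⟨j, hmemS (.single hvj) hjp⟩
    fun i hi => h.exists_activeEdge_out_of_mem_path hG hp
      (List.mem_toFinset.1 (mem_sdiff.1 hi.1).1) (fun hiw => by simp [S, hiw] at hi) hi.2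
  have hkp : k ∉ p.toFinset := fun hkp => hkS (hmemS (hvi.tail hik) (List.mem_toFinset.1 hkp))
  calc (1 : ℝ) = y (i, k) := hik.2.symm
    _ ≤ ∑ k ∈ (univ \ p.toFinset).filter (fun k => (i, k) ∈ E), y (i, k) :=
      single_le_sum (f := fun k => y (i, k)) (fun k hk => h.nonneg (mem_filter.1 hk).2)
        (mem_filter.2 ⟨mem_sdiff.2 ⟨mem_univ k, hkp⟩, hik.1⟩)
    _ ≤ _ := single_le_sum (fun i _ => sum_nonneg fun k hk => h.nonneg (mem_filter.1 hk).2) hip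

end FeasibleIntegral

end LiftedDisjointPaths

/-- Every feasible integral solution of the lifted disjoint paths problem
satisfies all path inequalities. -/
theorem feasible_integral_satisfies_path_ineqs
    {V : Type*} [Fintype V] [DecidableEq V] (E E' : Finset (V × V)) (s t : V)
    (hG : IsFlowNetwork E s t) (hG' : IsLiftedGraph E' s t)
    (x : V → ℝ) (y y' : V × V → ℝ)
    (h : FeasibleIntegral E E' s t x y y') :
    PathIneqs E E' y y' := by
  intro v w hvw p hp
  obtain ⟨hvs, hvt, -, -⟩ := hG' (v, w) hvw
  have hfirst := h.sum_filter_out_le_one hvs hvt p.toFinset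
  have hexits : 0 ≤ ∑ i ∈ p.toFinset \ {v, w},
      ∑ k ∈ (univ \ p.toFinset).filter (fun k => (i, k) ∈ E), y (i, k) :=
    sum_nonneg fun i _ => sum_nonneg fun k hk => h.nonneg (mem_filter.1 hk).2
  rcases h.2.2.1 (v, w) hvw with hzero | hone
  · by_cases hj : ∃ j ∈ p.toFinset.filter (fun j => (v, j) ∈ E), y (v, j) ≠ 0
    · obtain ⟨j, hj, hne⟩ := hj
      have hvj := h.activeEdge_of_ne_zero (mem_filter.1 hj).2 hne
      have hunreached : ¬ Relation.ReflTransGen (ActiveEdge E y) v w := fun hr => by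
        simpa [hzero] using h.lifted_eq_one_of_reflTransGen hvw hr
      have hleave :=
        h.one_le_sum_exits hG hp hvj (List.mem_toFinset.1 (mem_filter.1 hj).1) hunreached
      linarith
    · push Not at hj
      rw [sum_eq_zero hj]
      linarith
  · linarith
end
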